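/- Let G be a finite connected weighted graph where edge weights need not be distinct. Then G has at least one minimum spanning tree, and a spanning tree T is a minimum spanning tree if and only if no improvement is applicable to T. -/

import Mathlib

/-! Exchanging an edge `f` on the fundamental cycle of a non-tree edge `e` for `e` yields again a
spanning tree, of weight `w T - w f + w e`; hence a minimum spanning tree admits no improvement.
Conversely, let `T` be improvement-free and `T₂` any spanning tree, and induct on `|T₂ \ T|`. For
`e = uv ∈ T₂ \ T`, deleting `e` splits `T₂` into two sides, and the `T`-path from `u` to `v` crosses
between them along an edge `f ∉ T₂`. Then `e` lies on the `T₂`-path joining the ends of `f`, so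
`T₂ - e + f` is a spanning tree closer to `T`; it is no heavier than `T₂`, because `f` lies on the
fundamental cycle of `e` in `T`, where replacing `f` by `e` is not an improvement. -/

/-- `T` is a spanning tree of `G`. -/
def IsSpanningTree {V : Type*} (G T : SimpleGraph V) : Prop :=
  T ≤ G ∧ T.IsTree

/-- `f` lies on the fundamental cycle of the (non-tree) edge `{u,v}` w.r.t. the
tree `T`, i.e. on the unique `T`-path from `u` to `v`. -/
def InFundCycle {V : Type*} (T : SimpleGraph V) (u v : V) (f : Sym2 V) : Prop :=
  ∃ p : T.Walk u v, p.IsPath ∧ f ∈ p.edges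

/-- Total weight of the edges of `T`. -/
noncomputable def treeWeight {V : Type*} (w : Sym2 V → ℝ) (T : SimpleGraph V) : ℝ :=
  ∑ᶠ e ∈ T.edgeSet, w e

/-- One improvement step: exchange a tree edge `f` of the fundamental cycle of a
strictly lighter non-tree edge `{u,v}` for that edge. -/
def ImproveStep {V : Type*} (G : SimpleGraph V) (w : Sym2 V → ℝ)
    (T T' : SimpleGraph V) : Prop :=
  ∃ u v f, G.Adj u v ∧ s(u, v) ∉ T.edgeSet ∧ f ∈ T.edgeSet ∧ InFundCycle T u v f ∧
    w s(u, v) < w f ∧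
    T' = SimpleGraph.fromEdgeSet ((T.edgeSet \ {f}) ∪ {s(u, v)})

open SimpleGraph Set

lemma finsum_mem_insert_sdiff_singleton_add {α M : Type*} [AddCommMonoid M] (g : α → M)
    {s : Set α} {a b : α} (hs : s.Finite) (ha : a ∈ s) (hb : b ∉ s) :
    ∑ᶠ x ∈ insert b (s \ {a}), g x + g a = ∑ᶠ x ∈ s, g x + g b := by
  conv_rhs => rw [← insert_eq_of_mem ha, ← insert_sdiff_singleton]
  rw [finsum_mem_insert g (fun h => hb h.1) hs.sdiff,
    finsum_mem_insert g (fun h : a ∈ s \ {a} => h.2 rfl) hs.sdiff]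
  abel

section

variable {V : Type*}

namespace SimpleGraph

def swapEdge (T : SimpleGraph V) (f e : Sym2 V) : SimpleGraph V :=
  fromEdgeSet (T.edgeSet \ {f} ∪ {e})

lemma edgeSet_swapEdge (T : SimpleGraph V) (f : Sym2 V) {u v : V} (huv : u ≠ v) :
    (T.swapEdge f s(u, v)).edgeSet = insert s(u, v) (T.edgeSet \ {f}) := by
  ext e
  simp only [swapEdge, edgeSet_fromEdgeSet, union_singleton, mem_sdiff, mem_insert_iff,
    mem_singleton_iff, Sym2.mem_diagSet]
  grind [not_isDiag_of_mem_edgeSet, Sym2.mk_isDiag_iff]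

lemma swapEdge_eq_deleteEdges_sup_edge (T : SimpleGraph V) {f : Sym2 V} {u v : V} (huv : u ≠ v)
    (hf : f ≠ s(u, v)) : T.swapEdge f s(u, v) = (T ⊔ edge u v).deleteEdges {f} := by
  rw [← edgeSet_inj, edgeSet_swapEdge T f huv, edgeSet_deleteEdges, edgeSet_sup,
    edgeSet_edge_of_ne huv, union_singleton, insert_sdiff_singleton_comm hf.symm]

end SimpleGraph

lemma InFundCycle.mem_edgeSet {T : SimpleGraph V} {u v : V} {f : Sym2 V}
    (hf : InFundCycle T u v f) : f ∈ T.edgeSet :=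
  let ⟨p, _, hfp⟩ := hf
  p.edges_subset_edgeSet hfp

lemma not_isBridge_sup_edge_of_inFundCycle {T : SimpleGraph V} {u v : V} {f : Sym2 V}
    (huv : u ≠ v) (he : s(u, v) ∉ T.edgeSet) (hf : InFundCycle T u v f) :
    ¬ (T ⊔ edge u v).IsBridge f := by
  obtain ⟨p, hp, hfp⟩ := hf
  have hvu : (T ⊔ edge u v).Adj v u := Or.inr (by simp [edge_adj, huv.symm])
  have hcycle : (Walk.cons hvu (p.mapLe le_sup_left)).IsCycle := by
    rw [Walk.cons_isCycle_iff, Walk.edges_mapLe_eq_edges, Sym2.eq_swap]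
    exact ⟨hp.mapLe _, fun h => he (p.edges_subset_edgeSet h)⟩
  intro hbridge
  refine hbridge.notMem_edges_of_isCycle hcycle ?_
  simp [hfp]

namespace SimpleGraph

lemma IsTree.swapEdge [Finite V] {T : SimpleGraph V} (hT : T.IsTree) {u v : V} (huv : u ≠ v)
    (he : s(u, v) ∉ T.edgeSet) {f : Sym2 V} (hf : InFundCycle T u v f) :
    (T.swapEdge f s(u, v)).IsTree := by
  have hfT := hf.mem_edgeSet
  refine isTree_iff_connected_and_card.2 ⟨?_, ?_⟩
  · rw [swapEdge_eq_deleteEdges_sup_edge T huv (ne_of_mem_of_not_mem hfT he)]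
    induction f using Sym2.ind with
    | _ x y =>
      exact (hT.connected.mono le_sup_left).connected_delete_edge_of_not_isBridge
        (not_isBridge_sup_edge_of_inFundCycle huv he hf)
  · rw [Nat.card_coe_set_eq, edgeSet_swapEdge T f huv, ncard_exchange he hfT,
      ← Nat.card_coe_set_eq]
    exact (isTree_iff_connected_and_card.1 hT).2

lemma IsTree.exists_symm_exchange {T T₂ : SimpleGraph V} (hT₂ : T₂.IsTree) (hT : T.Connected)
    {u v : V} (he₂ : s(u, v) ∈ T₂.edgeSet) (he : s(u, v) ∉ T.edgeSet) :
    ∃ c d, s(c, d) ∉ T₂.edgeSet ∧ InFundCycle T u v s(c, d) ∧ InFundCycle T₂ c d s(u, v) := by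
  set S := {z | (T₂.deleteEdges {s(u, v)}).Reachable u z}
  have hvS : v ∉ S := isAcyclic_iff_forall_adj_isBridge.1 hT₂.isAcyclic he₂
  obtain ⟨p, hp⟩ := hT.exists_isPath u v
  obtain ⟨⟨⟨c, d⟩, hadj⟩, hdart, hcS, hdS⟩ := p.exists_boundary_dart S (Reachable.refl u) hvS
  have hcross (q : T₂.Walk c d) : s(u, v) ∈ q.edges := by
    by_contra hq
    exact hdS (hcS.trans (reachable_deleteEdges_iff_exists_walk.2 ⟨q, hq⟩))
  refine ⟨c, d, fun hcd₂ => ?_, ⟨p, hp, p.edges_eq_map_darts ▸ List.mem_map_of_mem hdart⟩, ?_⟩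
  · have huv := hcross (T₂.mem_edgeSet.1 hcd₂).toWalk
    rw [Adj.edges_toWalk, List.mem_singleton] at huv
    exact he (huv ▸ hadj)
  · obtain ⟨q, hq⟩ := hT₂.connected.exists_isPath c d
    exact ⟨q, hq, hcross q⟩

end SimpleGraph

lemma treeWeight_swapEdge [Finite V] (w : Sym2 V → ℝ) {T : SimpleGraph V} {u v : V}
    (huv : u ≠ v) (he : s(u, v) ∉ T.edgeSet) {f : Sym2 V} (hf : f ∈ T.edgeSet) :
    treeWeight w (T.swapEdge f s(u, v)) + w f = treeWeight w T + w s(u, v) := by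
  rw [treeWeight, treeWeight, edgeSet_swapEdge T f huv]
  exact finsum_mem_insert_sdiff_singleton_add w (toFinite _) hf he

lemma IsSpanningTree.swapEdge [Finite V] {G T : SimpleGraph V} (hT : IsSpanningTree G T)
    {u v : V} (huv : G.Adj u v) (he : s(u, v) ∉ T.edgeSet) {f : Sym2 V}
    (hf : InFundCycle T u v f) : IsSpanningTree G (T.swapEdge f s(u, v)) := by
  refine ⟨?_, hT.2.swapEdge huv.ne he hf⟩
  rw [← edgeSet_subset_edgeSet, edgeSet_swapEdge T f huv.ne]
  exact insert_subset huv (sdiff_subset.trans (edgeSet_mono hT.1))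

lemma ImproveStep.isSpanningTree_and_treeWeight_lt [Finite V] {G T T' : SimpleGraph V}
    {w : Sym2 V → ℝ} (h : ImproveStep G w T T') (hT : IsSpanningTree G T) :
    IsSpanningTree G T' ∧ treeWeight w T' < treeWeight w T := by
  obtain ⟨u, v, f, huv, he, hf, hcyc, hlt, rfl : T' = T.swapEdge f s(u, v)⟩ := h
  have := treeWeight_swapEdge w huv.ne he hf
  exact ⟨hT.swapEdge huv he hcyc, by linarith⟩

lemma treeWeight_le_of_forall_not_improveStep [Finite V] {G T : SimpleGraph V}
    {w : Sym2 V → ℝ} (hT : IsSpanningTree G T) (hni : ∀ T', ¬ ImproveStep G w T T')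
    {T₂ : SimpleGraph V} (hT₂ : IsSpanningTree G T₂) : treeWeight w T ≤ treeWeight w T₂ := by
  induction hn : (T₂.edgeSet \ T.edgeSet).ncard using Nat.strong_induction_on generalizing T₂ with
  | _ n ih =>
  by_cases hsub : T₂.edgeSet ⊆ T.edgeSet
  · rw [(isTree_iff_minimal_connected.1 hT.2).eq_of_le hT₂.2.connected
      (edgeSet_subset_edgeSet.1 hsub)]
  obtain ⟨e, he₂, he⟩ := not_subset.1 hsub
  induction e using Sym2.ind with | _ u v =>
  obtain ⟨c, d, hcd₂, hcyc, hcyc₂⟩ := hT₂.2.exists_symm_exchange hT.2.connected he₂ he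
  have hcd := hcyc.mem_edgeSet
  have hw : w s(c, d) ≤ w s(u, v) := not_lt.1 fun hlt =>
    hni _ ⟨u, v, s(c, d), hT₂.1 he₂, he, hcd, hcyc, hlt, rfl⟩
  have hfewer : ((T₂.swapEdge s(u, v) s(c, d)).edgeSet \ T.edgeSet).ncard < n := by
    rw [← hn, edgeSet_swapEdge _ _ (T.ne_of_adj hcd), insert_sdiff_of_mem _ hcd, sdiff_sdiff_comm]
    exact ncard_sdiff_singleton_lt_of_mem ⟨he₂, he⟩ (toFinite _)
  have := ih _ hfewer (hT₂.swapEdge (hT.1 hcd) hcd₂ hcyc₂) rfl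
  have := treeWeight_swapEdge w (T.ne_of_adj hcd) hcd₂ he₂
  linarith

end

theorem mst_iff_no_improvement_general {V : Type*} [Fintype V]
    (G : SimpleGraph V) (w : Sym2 V → ℝ) (hG : G.Connected) :
    (∃ T, IsSpanningTree G T ∧
      ∀ T', IsSpanningTree G T' → treeWeight w T ≤ treeWeight w T') ∧
    (∀ T, IsSpanningTree G T →
      ((∀ T', IsSpanningTree G T' → treeWeight w T ≤ treeWeight w T') ↔
        (∀ T', ¬ ImproveStep G w T T'))) := by
  refine ⟨?_, fun T hT => ⟨fun hmin T' hstep => ?_, fun hni T' hT' =>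
    treeWeight_le_of_forall_not_improveStep hT hni hT'⟩⟩
  · obtain ⟨T₀, hle, hT₀⟩ := hG.exists_isTree_le
    exact Set.exists_min_image _ (treeWeight w) (Set.toFinite _) ⟨T₀, hle, hT₀⟩
  · obtain ⟨hT', hlt⟩ := hstep.isSpanningTree_and_treeWeight_lt hT
    exact (hmin T' hT').not_gt hlt

/-- A finite connected weighted graph (weights not necessarily distinct) has a
minimum spanning tree, and a spanning tree is minimum if and only if no
improvement is applicable to it. -/
theorem mst_iff_no_improvement {V : Type*} [Fintype V] [Nonempty V]
    (G : SimpleGraph V) (w : Sym2 V → ℝ) (hw : ∀ x, 0 < w x) (hG : G.Connected) :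
    (∃ T, IsSpanningTree G T ∧
      ∀ T', IsSpanningTree G T' → treeWeight w T ≤ treeWeight w T') ∧
    (∀ T, IsSpanningTree G T →
      ((∀ T', IsSpanningTree G T' → treeWeight w T ≤ treeWeight w T') ↔
        (∀ T', ¬ ImproveStep G w T T'))) :=
  mst_iff_no_improvement_general G w hG
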